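/- arXiv:2104.11062 — 3 statements merged into one kernel-verified Lean document; each statement's English description precedes it below -/
import Mathlib

section
/- Let R be a commutative Noetherian integral domain with field of fractions K, let d ∈ R be a nonzero element, and let I be a nonzero ideal of R with I ⊆ dR. If Ext¹_R(dR/I, R) = 0 (Ext taken in the category of R-modules; note Hom_R(dR/I, R) = 0 holds automatically since dR/I is a torsion module over the domain R), then the reflexive hull of I is the principal R-submodule generated by d: (I⁻¹)⁻¹ = dR as R-submodules of K. -/
open CategoryTheory

open Limits

noncomputable section
namespace MyExtAux

variable {C : Type*} [Category C] [Abelian C] [EnoughProjectives C]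
variable {Z P : C} (π : P ⟶ Z)

def ofComplex' : ChainComplex C ℕ :=
  ChainComplex.mk' P (Projective.syzygies π) (Projective.d π)
    (fun f => ⟨_, Projective.d f, by exact (Category.assoc _ _ _).trans ((_ ≫= kernel.condition _).trans comp_zero)⟩)

lemma ofComplex'_d_1_0 :
    (ofComplex' π).d 1 0 = Projective.d π := by
  simp [ofComplex']

lemma ofComplex'_exactAt_succ (n : ℕ) :
    (ofComplex' π).ExactAt (n + 1) := by
  rw [HomologicalComplex.exactAt_iff' _ (n + 1 + 1) (n + 1) n (by simp) (by simp)]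
  have h : (ofComplex' π).d (n + 2) (n + 1) = _ := ChainComplex.mk'_d _ _ _ _ n
  let e : Projective.syzygies ((ofComplex' π).d (n + 1) n) ≅ (ofComplex' π).X (n + 2) :=
    (ChainComplex.mk'XIso P (Projective.syzygies π) (Projective.d π)
      (fun f => ⟨_, Projective.d f, by exact (Category.assoc _ _ _).trans ((_ ≫= kernel.condition _).trans comp_zero)⟩) n).symm
  have h' : (ofComplex' π).d (n + 2) (n + 1) = e.inv ≫ Projective.d ((ofComplex' π).d (n + 1) n) := h
  let α : ShortComplex.mk (Projective.d ((ofComplex' π).d (n + 1) n)) ((ofComplex' π).d (n + 1) n) ((Category.assoc _ _ _).trans ((_ ≫= kernel.condition ((ofComplex' π).d (n + 1) n)).trans comp_zero)) ⟶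
      (ofComplex' π).sc' (n + 1 + 1) (n + 1) n :=
    { τ₁ := e.hom
      τ₂ := 𝟙 _
      τ₃ := 𝟙 _
      comm₁₂ := by
        change e.hom ≫ (ofComplex' π).d (n + 2) (n + 1) = Projective.d ((ofComplex' π).d (n + 1) n) ≫ 𝟙 _
        exact (congrArg (e.hom ≫ ·) h').trans ((e.hom_inv_id_assoc _).trans (Category.comp_id _).symm)
      comm₂₃ := by
        change 𝟙 _ ≫ (ofComplex' π).d (n + 1) n = (ofComplex' π).d (n + 1) n ≫ 𝟙 _
        rw [Category.id_comp, Category.comp_id] }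
  haveI : Epi α.τ₁ := (inferInstance : Epi e.hom)
  haveI : IsIso α.τ₂ := (inferInstance : IsIso (𝟙 ((ofComplex' π).X (n + 1))))
  haveI : Mono α.τ₃ := (inferInstance : Mono (𝟙 ((ofComplex' π).X n)))
  exact (ShortComplex.exact_iff_of_epi_of_isIso_of_mono α).1 (exact_d_f _)

instance [Projective P] (n : ℕ) : Projective ((ofComplex' π).X n) := by
  obtain (_ | _ | _ | n) := n
  · exact (inferInstanceAs (Projective P))
  all_goals apply Projective.projective_over

def resolution' [Projective P] [Epi π] : ProjectiveResolution Z where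
  complex := ofComplex' π
  π := (ChainComplex.toSingle₀Equiv _ _).symm ⟨π, by
          rw [ofComplex'_d_1_0]; exact (Category.assoc _ _ _).trans ((_ ≫= kernel.condition _).trans comp_zero)⟩
  quasiIso := ⟨fun n => by
    cases n
    · rw [ChainComplex.quasiIsoAt₀_iff, ShortComplex.quasiIso_iff_of_zeros']
      · refine (ShortComplex.exact_and_epi_g_iff_of_iso ?_).2
          ⟨exact_d_f π, by dsimp; infer_instance⟩
        exact ShortComplex.isoMk (Iso.refl _) (Iso.refl _) (Iso.refl _)
          (by simp [ofComplex']; erw [Category.id_comp, Category.comp_id])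
          (by erw [Category.id_comp, Category.comp_id]; exact (ChainComplex.toSingle₀Equiv_symm_apply_f_zero (C := ofComplex' π) (X := Z) π _).symm)
      all_goals rfl
    · rw [quasiIsoAt_iff_exactAt']
      · apply ofComplex'_exactAt_succ
      · apply ChainComplex.exactAt_succ_single_obj⟩

end MyExtAux

/-- If `Ext¹(B/A, R)` vanishes and `B` is projective, every linear map `A → R` extends to `B`. -/
theorem lift_of_ext_subsingleton {R : Type u} [CommRing R] {B : Type u} [AddCommGroup B]
    [Module R B] [Module.Projective R B] (A : Submodule R B)
    (hext : Subsingleton (((Ext R (ModuleCat.{u} R) 1).obj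
        (Opposite.op (ModuleCat.of R (B ⧸ A)))).obj (ModuleCat.of R R)))
    (φ : A →ₗ[R] R) : ∃ g : B →ₗ[R] R, ∀ a : A, g (a : B) = φ a := by
  let P : ModuleCat.{u} R := ModuleCat.of R B
  haveI : Projective P := (IsProjective.iff_projective B).mp ‹Module.Projective R B›
  let M : ModuleCat.{u} R := ModuleCat.of R (B ⧸ A)
  let π : P ⟶ M := ModuleCat.ofHom A.mkQ
  haveI : Epi π := (ModuleCat.epi_iff_surjective π).2 (Submodule.mkQ_surjective A)
  let Q : ProjectiveResolution M := MyExtAux.resolution' π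
  have h1 : Subsingleton ((Q.complex.linearYonedaObj R (ModuleCat.of R R)).homology 1) := by
    exact Equiv.subsingleton ((Q.isoExt 1 (ModuleCat.of R R)).symm.toLinearEquiv.toEquiv)
  have hz : (Q.complex.linearYonedaObj R (ModuleCat.of R R)).ExactAt 1 := by
    rw [HomologicalComplex.exactAt_iff_isZero_homology]
    exact @ModuleCat.isZero_of_subsingleton _ _ _ h1
  rw [HomologicalComplex.exactAt_iff' _ 0 1 2 (by simp) (by simp)] at hz
  rw [ShortComplex.moduleCat_exact_iff] at hz
  -- the differential δ : Q₁ → Q₀ = B, with range A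
  let δ : Q.complex.X 1 ⟶ P := Q.complex.d 1 0
  have hδ : δ = Projective.d π := MyExtAux.ofComplex'_d_1_0 π
  have hδrange : LinearMap.range δ.hom = A := by
    have h2 := (exact_d_f π).moduleCat_range_eq_ker
    rw [hδ]
    exact h2.trans (Submodule.ker_mkQ A)
  have hmem : ∀ x, δ x ∈ A := fun x => hδrange ▸ LinearMap.mem_range_self _ x
  let f : Q.complex.X 1 →ₗ[R] R := φ ∘ₗ (LinearMap.codRestrict A δ.hom hmem)
  obtain ⟨g, hg⟩ := hz (ModuleCat.ofHom f) (by
    show (Linear.leftComp R (ModuleCat.of R R) (Q.complex.d 2 1)) (ModuleCat.ofHom f) = 0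
    ext p
    have h0 : LinearMap.codRestrict A δ.hom hmem (Q.complex.d 2 1 p) = 0 := by
      ext
      show δ (Q.complex.d 2 1 p) = 0
      have h4 : (Q.complex.d 2 1 ≫ Q.complex.d 1 0) p = ((0 : Q.complex.X 2 ⟶ P)) p := by
        rw [Q.complex.d_comp_d 2 1 0]
        rfl
      exact h4
    show φ (LinearMap.codRestrict A δ.hom hmem (Q.complex.d 2 1 p)) = 0
    rw [h0, map_zero])
  let g' : Q.complex.X 0 ⟶ ModuleCat.of R R := g
  have hg' : (Linear.leftComp R (ModuleCat.of R R) (Q.complex.d 1 0)) g' = ModuleCat.ofHom f := hg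
  refine ⟨g'.hom, fun a => ?_⟩
  obtain ⟨p, hp⟩ : (a : B) ∈ LinearMap.range δ.hom :=
    hδrange.symm ▸ a.2
  have h3 : g' (δ p) = f p := LinearMap.congr_fun (congrArg ModuleCat.Hom.hom hg') p
  have h5 : f p = φ a := by
    show φ (LinearMap.codRestrict A δ.hom hmem p) = φ a
    congr 1
    exact Subtype.ext hp
  have hp' : (δ p : B) = (a : B) := hp
  rw [← hp']
  exact h3.trans h5

/-- `1 / span {u} = span {u⁻¹}` for nonzero `u` in a field extension of fractions. -/
theorem one_div_span_singleton_aux {R K : Type*} [CommRing R] [Field K] [Algebra R K]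
    (u : K) (hu : u ≠ 0) :
    (1 : Submodule R K) / Submodule.span R {u} = Submodule.span R {u⁻¹} := by
  ext x
  rw [Submodule.mem_div_iff_forall_mul_mem, Submodule.mem_span_singleton]
  constructor
  · intro h
    have h1 : x * u ∈ (1 : Submodule R K) := h u (Submodule.mem_span_singleton_self u)
    rw [Submodule.one_eq_range] at h1
    obtain ⟨r, hr⟩ := h1
    refine ⟨r, ?_⟩
    rw [Algebra.smul_def]
    show algebraMap R K r * u⁻¹ = x
    rw [show (algebraMap R K r : K) = x * u from hr]
    field_simp
  · rintro ⟨r, rfl⟩ y hy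
    obtain ⟨s, rfl⟩ := Submodule.mem_span_singleton.mp hy
    rw [Submodule.one_eq_range]
    refine ⟨r * s, ?_⟩
    show algebraMap R K (r * s) = r • u⁻¹ * s • u
    rw [map_mul, Algebra.smul_def, Algebra.smul_def]
    field_simp

/-- Let `R` be a commutative Noetherian integral domain with field of
fractions `K`, `d ∈ R` a nonzero element and `I` a nonzero ideal with `I ⊆ dR`.
If `Ext¹_R(dR/I, R) = 0` (i.e. the Ext module is a subsingleton), then the reflexive hull
`(I⁻¹)⁻¹` of `I` in `K` is the principal `R`-submodule of `K` generated by `d`. -/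
theorem reflexive_hull_eq_principal_of_ext_vanishing
    (R K : Type*) [CommRing R] [IsDomain R] [IsNoetherianRing R]
    [Field K] [Algebra R K] [IsFractionRing R K]
    (d : R) (hd : d ≠ 0) (I : Ideal R) (hI : I ≠ ⊥) (hle : I ≤ Ideal.span {d})
    (hext : Subsingleton
      (((Ext R (ModuleCat R) 1).obj
          (Opposite.op (ModuleCat.of R
            ((Ideal.span {d} : Ideal R) ⧸
              (Submodule.comap (Ideal.span {d} : Ideal R).subtype I))))).obj
        (ModuleCat.of R R))) :
    ((1 : Submodule R K) / ((1 : Submodule R K) / Submodule.map (Algebra.linearMap R K) I))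
      = Submodule.span R {algebraMap R K d} := by
  have hinj : Function.Injective (algebraMap R K) := IsFractionRing.injective R K
  have hdK : algebraMap R K d ≠ 0 := fun h => hd (hinj (by rw [h, map_zero]))
  haveI : Module.Projective R (Ideal.span {d} : Ideal R) :=
    Module.Projective.of_equiv (LinearEquiv.toSpanNonzeroSingleton R R d hd)
  set A : Submodule R (Ideal.span {d} : Ideal R) :=
    Submodule.comap (Ideal.span {d} : Ideal R).subtype I with hA
  have key : ∀ φ : A →ₗ[R] R,
      ∃ g : (Ideal.span {d} : Ideal R) →ₗ[R] R, ∀ a : A, g (a : (Ideal.span {d} : Ideal R)) = φ a :=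
    fun φ => lift_of_ext_subsingleton A hext φ
  set J : Submodule R K := Submodule.map (Algebra.linearMap R K) I with hJ
  -- Step 1 : 1 / J = span {dK⁻¹}
  have step1 : (1 : Submodule R K) / J = Submodule.span R {(algebraMap R K d)⁻¹} := by
    apply le_antisymm
    · intro x hx
      rw [Submodule.mem_div_iff_forall_mul_mem] at hx
      -- the linear map A → K, a ↦ x * aK(a), lands in the image of R
      let lin : A →ₗ[R] K := (LinearMap.mul R K x) ∘ₗ (Algebra.linearMap R K) ∘ₗ
        ((Ideal.span {d} : Ideal R).subtype ∘ₗ A.subtype)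
      have hlin : ∀ a : A, lin a ∈ LinearMap.range (Algebra.linearMap R K) := by
        intro a
        rw [← Submodule.one_eq_range]
        exact hx _ (Submodule.mem_map_of_mem a.2)
      let eq1 := LinearEquiv.ofInjective (Algebra.linearMap R K) hinj
      let φ : A →ₗ[R] R := (eq1.symm : _ →ₗ[R] R) ∘ₗ
        (LinearMap.codRestrict (LinearMap.range (Algebra.linearMap R K)) lin hlin)
      have hφ : ∀ a : A, algebraMap R K (φ a) = x * algebraMap R K ((a : _) : R) := by
        intro a
        have h1 : eq1 (φ a) = ⟨lin a, hlin a⟩ := by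
          show eq1 (eq1.symm _) = _
          rw [eq1.apply_symm_apply]
          rfl
        have h2 := congrArg Subtype.val h1
        simp only [eq1, LinearEquiv.ofInjective_apply] at h2
        exact h2
      obtain ⟨g, hg⟩ := key φ
      set e0 : R := g ⟨d, Submodule.mem_span_singleton_self d⟩ with he0
      obtain ⟨i₀, hi₀I, hi₀⟩ := (Submodule.ne_bot_iff I).mp hI
      obtain ⟨c₀, hc₀⟩ := Ideal.mem_span_singleton'.mp (hle hi₀I)
      have hc₀0 : c₀ ≠ 0 := by
        rintro rfl; rw [zero_mul] at hc₀; exact hi₀ hc₀.symm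
      let a₀ : A := ⟨⟨i₀, hle hi₀I⟩, hi₀I⟩
      have h6 : algebraMap R K (g a₀) = x * algebraMap R K i₀ := by
        rw [hg a₀]; exact hφ a₀
      have h7 : (a₀ : (Ideal.span {d} : Ideal R))
          = c₀ • ⟨d, Submodule.mem_span_singleton_self d⟩ := by
        apply Subtype.ext
        show i₀ = c₀ • d
        rw [smul_eq_mul, ← hc₀]
      have h8 : g a₀ = c₀ * e0 := by
        rw [h7, map_smul, smul_eq_mul, he0]
      have h9 : algebraMap R K c₀ * algebraMap R K e0
          = x * (algebraMap R K c₀ * algebraMap R K d) := by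
        rw [← map_mul, ← h8, h6, ← map_mul, hc₀]
      have hcK : algebraMap R K c₀ ≠ 0 := fun h => hc₀0 (hinj (by rw [h, map_zero]))
      have h10 : algebraMap R K e0 = x * algebraMap R K d := by
        apply mul_left_cancel₀ hcK
        rw [h9]; ring
      rw [Submodule.mem_span_singleton]
      refine ⟨e0, ?_⟩
      rw [Algebra.smul_def]
      show algebraMap R K e0 * (algebraMap R K d)⁻¹ = x
      rw [h10]
      field_simp
    · rw [Submodule.span_le, Set.singleton_subset_iff]
      rw [SetLike.mem_coe, Submodule.mem_div_iff_forall_mul_mem]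
      rintro y ⟨i, hiI, rfl⟩
      obtain ⟨c, hc⟩ := Ideal.mem_span_singleton'.mp (hle hiI)
      rw [Submodule.one_eq_range]
      refine ⟨c, ?_⟩
      show algebraMap R K c = (algebraMap R K d)⁻¹ * (Algebra.linearMap R K) i
      show algebraMap R K c = (algebraMap R K d)⁻¹ * algebraMap R K i
      rw [← hc, map_mul]
      field_simp
  rw [step1, one_div_span_singleton_aux _ (inv_ne_zero hdK), inv_inv]
end
end

section
/- Let R be a commutative Noetherian integral domain, let M₁ and M₂ be ideals of R, and let d₁, d₂ ∈ R be nonzero elements such that for i = 1, 2 one has M_i ⊆ d_iR and KrullDim(R/(M_i : d_i)) + 2 ≤ KrullDim(R), where (M_i : d_i) = { r ∈ R : r·d_i ∈ M_i } (so that R/(M_i : d_i) ≅ d_iR/M_i as R-modules). Then M₁M₂ ⊆ d₁d₂R and KrullDim(R/((M₁M₂) : d₁d₂)) + 2 ≤ KrullDim(R). -/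
open Order in
lemma ringKrullDim_quotient_mul_le {R : Type*} [CommRing R] (I J : Ideal R) :
    ringKrullDim (R ⧸ (I * J)) ≤ max (ringKrullDim (R ⧸ I)) (ringKrullDim (R ⧸ J)) := by
  apply iSup_le
  intro p
  -- pull back the chain to Spec R
  have hcm : StrictMono (PrimeSpectrum.comap (Ideal.Quotient.mk (I * J))) := by
    intro a b hab
    refine lt_of_le_of_ne (fun x hx => hab.le hx) ?_
    intro h
    exact hab.ne (PrimeSpectrum.comap_injective_of_surjective _ Ideal.Quotient.mk_surjective h)
  set q := p.map _ hcm with hqdef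
  have hker : ∀ i, I * J ≤ (q i).asIdeal := by
    intro i x hx
    show Ideal.Quotient.mk (I * J) x ∈ (p i).asIdeal
    rw [Ideal.Quotient.eq_zero_iff_mem.mpr hx]
    exact zero_mem _
  have hsplit : I ≤ (q 0).asIdeal ∨ J ≤ (q 0).asIdeal :=
    ((q 0).isPrime.mul_le).mp (hker 0)
  have key : ∀ (K : Ideal R), (∀ i, K ≤ (q i).asIdeal) →
      (p.length : WithBot (WithTop ℕ)) ≤ ringKrullDim (R ⧸ K) := by
    intro K hK
    have hprime : ∀ i, ((q i).asIdeal.map (Ideal.Quotient.mk K)).IsPrime := fun i =>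
      Ideal.map_isPrime_of_surjective Ideal.Quotient.mk_surjective
        (by rw [Ideal.mk_ker]; exact hK i)
    have hcomap : ∀ i, ((q i).asIdeal.map (Ideal.Quotient.mk K)).comap
        (Ideal.Quotient.mk K) = (q i).asIdeal := by
      intro i
      rw [Ideal.comap_map_of_surjective _ Ideal.Quotient.mk_surjective,
        ← RingHom.ker_eq_comap_bot, Ideal.mk_ker, sup_eq_left.mpr (hK i)]
    let r : LTSeries (PrimeSpectrum (R ⧸ K)) :=
      ⟨p.length, fun i => ⟨(q i).asIdeal.map (Ideal.Quotient.mk K), hprime i⟩, by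
        intro i
        have hlt : (q i.castSucc).asIdeal < (q i.succ).asIdeal := q.step i
        refine lt_of_le_of_ne (Ideal.map_mono hlt.le) ?_
        intro h
        have h' := h
        apply hlt.ne
        rw [← hcomap i.castSucc, ← hcomap i.succ]
        exact congrArg (Ideal.comap (Ideal.Quotient.mk K)) h'⟩
    exact Order.LTSeries.length_le_krullDim r
  rcases hsplit with h | h
  · refine le_trans (key I fun i => le_trans h ?_) (le_max_left _ _)
    exact q.monotone (Fin.zero_le i)
  · refine le_trans (key J fun i => le_trans h ?_) (le_max_right _ _)
    exact q.monotone (Fin.zero_le i)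

/-- (Commutative case of Lemma 1.13.)  Let `R` be a commutative Noetherian
integral domain, `M₁, M₂` ideals, `d₁, d₂` nonzero elements with `Mᵢ ⊆ dᵢR` and
`KrullDim (R/(Mᵢ : dᵢ)) + 2 ≤ KrullDim R` (so that `R/(Mᵢ : dᵢ) ≅ dᵢR/Mᵢ`).  Then
`M₁M₂ ⊆ d₁d₂R` and `KrullDim (R/((M₁M₂) : d₁d₂)) + 2 ≤ KrullDim R`. -/
theorem pcc_preserved_under_products
    (R : Type*) [CommRing R] [IsDomain R] [IsNoetherianRing R]
    (M₁ M₂ : Ideal R) (d₁ d₂ : R) (hd₁ : d₁ ≠ 0) (hd₂ : d₂ ≠ 0)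
    (hle₁ : M₁ ≤ Ideal.span {d₁}) (hle₂ : M₂ ≤ Ideal.span {d₂})
    (hdim₁ : ringKrullDim (R ⧸ Submodule.colon M₁ (Ideal.span {d₁})) + 2 ≤ ringKrullDim R)
    (hdim₂ : ringKrullDim (R ⧸ Submodule.colon M₂ (Ideal.span {d₂})) + 2 ≤ ringKrullDim R) :
    M₁ * M₂ ≤ Ideal.span {d₁ * d₂} ∧
      ringKrullDim (R ⧸ Submodule.colon (M₁ * M₂) (Ideal.span {d₁ * d₂})) + 2
        ≤ ringKrullDim R := by
  have hprod : M₁ * M₂ ≤ Ideal.span {d₁ * d₂} := by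
    rw [← Ideal.span_singleton_mul_span_singleton]
    exact Ideal.mul_mono hle₁ hle₂
  refine ⟨hprod, ?_⟩
  set C₁ := Submodule.colon M₁ (Ideal.span {d₁})
  set C₂ := Submodule.colon M₂ (Ideal.span {d₂})
  have hCC : C₁ * C₂ ≤ Submodule.colon (M₁ * M₂) (Ideal.span {d₁ * d₂}) := by
    rw [Ideal.mul_le]
    intro r₁ hr₁ r₂ hr₂
    rw [Submodule.mem_colon] at *
    intro p hp
    change p ∈ Ideal.span {d₁ * d₂} at hp
    rw [Ideal.mem_span_singleton] at hp
    obtain ⟨c, rfl⟩ := hp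
    have h₁ : r₁ * d₁ ∈ M₁ := by
      simpa using hr₁ d₁ (Ideal.mem_span_singleton_self d₁)
    have h₂ : r₂ * d₂ ∈ M₂ := by
      simpa using hr₂ d₂ (Ideal.mem_span_singleton_self d₂)
    have : (r₁ * d₁) * (r₂ * d₂) ∈ M₁ * M₂ := Ideal.mul_mem_mul h₁ h₂
    have := Ideal.mul_mem_left _ c this
    rw [smul_eq_mul]
    convert this using 1
    ring
  have hsurj : Function.Surjective
      (Ideal.Quotient.factor hCC) := by
    intro x
    obtain ⟨y, rfl⟩ := Ideal.Quotient.mk_surjective x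
    exact ⟨Ideal.Quotient.mk _ y, rfl⟩
  have h1 : ringKrullDim (R ⧸ Submodule.colon (M₁ * M₂) (Ideal.span {d₁ * d₂}))
      ≤ ringKrullDim (R ⧸ (C₁ * C₂)) :=
    ringKrullDim_le_of_surjective _ hsurj
  have h2 := ringKrullDim_quotient_mul_le C₁ C₂
  calc ringKrullDim (R ⧸ Submodule.colon (M₁ * M₂) (Ideal.span {d₁ * d₂})) + 2
      ≤ max (ringKrullDim (R ⧸ C₁)) (ringKrullDim (R ⧸ C₂)) + 2 :=
        add_le_add_left (le_trans h1 h2) 2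
    _ ≤ ringKrullDim R := by
        rcases max_cases (ringKrullDim (R ⧸ C₁)) (ringKrullDim (R ⧸ C₂)) with ⟨h, _⟩ | ⟨h, _⟩
        · rw [h]; exact hdim₁
        · rw [h]; exact hdim₂
end

section
/- Let k be a field and let p ∈ k[c] be a nonzero polynomial in one variable. Then the quotient ring Z := k[a,b,c]/(ab − p(c)), i.e., the polynomial ring in three variables a, b, c over k modulo the principal ideal generated by ab − p(c), is a Noetherian integral domain which is integrally closed in its field of fractions (i.e., Z is a normal domain). -/
/-- The hypersurface ring `k[a,b,c]/(ab - p(c))`. -/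
abbrev HypersurfaceRing (k : Type*) [Field k] (p : Polynomial k) : Type _ :=
  MvPolynomial (Fin 3) k ⧸
    Ideal.span {MvPolynomial.X 0 * MvPolynomial.X 1
      - Polynomial.aeval (MvPolynomial.X 2 : MvPolynomial (Fin 3) k) p}

open Polynomial

noncomputable section
set_option linter.unusedSectionVars false

namespace HypNormal

variable {R : Type*} [CommRing R] [IsDomain R] (s t : R)

def e : R[X] := C s * X - C t

def tau : Localization.Away s :=
  algebraMap R (Localization.Away s) t * IsLocalization.Away.invSelf s

lemma s_mul_tau : algebraMap R (Localization.Away s) s * tau s t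
    = algebraMap R (Localization.Away s) t := by
  rw [tau, ← mul_assoc, mul_comm (algebraMap R (Localization.Away s) s), mul_assoc,
    IsLocalization.Away.mul_invSelf, mul_one]

def eps : R[X] →ₐ[R] Localization.Away s := aeval (tau s t)

lemma eps_e : eps s t (e s t) = 0 := by
  simp [eps, e, map_sub, map_mul, s_mul_tau]

lemma map_e : (e s t).map (algebraMap R (Localization.Away s)) =
    C (algebraMap R (Localization.Away s) s) * (X - C (tau s t)) := by
  simp [e, Polynomial.map_sub, Polynomial.map_mul, mul_sub, ← map_mul, s_mul_tau]

variable {s t}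

lemma algebraMap_away_injective (hs : s ≠ 0) :
    Function.Injective (algebraMap R (Localization.Away s)) :=
  IsLocalization.injective _ (powers_le_nonZeroDivisors_of_noZeroDivisors hs)

lemma ker_eps_le (hs : Prime s)
    {f : R[X]} (hf : eps s t f = 0) :
    ∃ (n : ℕ) (q : R[X]), C (s ^ n) * f = e s t * q := by
  set A := Localization.Away s
  have hroot : (f.map (algebraMap R A)).IsRoot (tau s t) := by
    rw [IsRoot, eval_map, ← aeval_def]
    exact hf
  obtain ⟨Q, hQ⟩ := (dvd_iff_isRoot.mpr hroot)
  obtain ⟨b, hb⟩ := IsLocalization.integerNormalization_map_to_map (Submonoid.powers s) Q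
  obtain ⟨N, hN⟩ := b.2
  have hN' : s ^ N = (b : R) := hN
  refine ⟨N + 1, IsLocalization.integerNormalization (Submonoid.powers s) Q, ?_⟩
  have hinj : Function.Injective (Polynomial.mapRingHom (algebraMap R A)) :=
    Polynomial.map_injective _ (algebraMap_away_injective hs.ne_zero)
  apply hinj
  simp only [coe_mapRingHom, Polynomial.map_mul, map_C]
  rw [hb, map_e, hQ]
  rw [Algebra.smul_def, Polynomial.algebraMap_apply (R := R) (A := A), ← hN',
    pow_succ, map_mul, map_pow, C_mul, C_pow]
  ring

section sat
variable (hs : Prime s) (hst : ¬ s ∣ t)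
include hs hst

/-- mod-s reduction facts -/
lemma map_e_mod : (e (R := R) s t).map (Ideal.Quotient.mk (Ideal.span {s})) =
    - C (Ideal.Quotient.mk (Ideal.span {s}) t) := by
  have : Ideal.Quotient.mk (Ideal.span {s}) s = 0 := by
    rw [Ideal.Quotient.eq_zero_iff_mem]; exact Ideal.mem_span_singleton_self s
  simp [e, Polynomial.map_sub, Polynomial.map_mul, this]

lemma quot_domain : IsDomain (R ⧸ Ideal.span {s}) := by
  haveI : (Ideal.span {s}).IsPrime := (Ideal.span_singleton_prime hs.ne_zero).mpr hs
  infer_instance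

lemma mk_t_ne_zero : Ideal.Quotient.mk (Ideal.span {s}) t ≠ 0 := by
  rw [Ne, Ideal.Quotient.eq_zero_iff_mem, Ideal.mem_span_singleton]
  exact hst

/-- Saturation: if `s * f ∈ (e)` then `f ∈ (e)`. -/
lemma sat {f : R[X]} (hf : C s * f ∈ Ideal.span {e (R := R) s t}) :
    f ∈ Ideal.span {e (R := R) s t} := by
  haveI := quot_domain hs hst
  rw [Ideal.mem_span_singleton] at hf ⊢
  obtain ⟨q, hq⟩ := hf
  -- reduce mod s
  have h0 : (e (R := R) s t * q).map (Ideal.Quotient.mk (Ideal.span {s})) = 0 := by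
    rw [← hq]
    have : Ideal.Quotient.mk (Ideal.span {s}) s = 0 := by
      rw [Ideal.Quotient.eq_zero_iff_mem]; exact Ideal.mem_span_singleton_self s
    simp [Polynomial.map_mul, this]
  rw [Polynomial.map_mul, map_e_mod hs hst, neg_mul, neg_eq_zero, mul_eq_zero] at h0
  rcases h0 with h0 | h0
  · exact absurd (C_eq_zero.mp h0) (mk_t_ne_zero hs hst)
  · -- every coefficient of q divisible by s
    have hdvd : C s ∣ q := by
      rw [C_dvd_iff_dvd_coeff]
      intro i
      rw [← Ideal.mem_span_singleton, ← Ideal.Quotient.eq_zero_iff_mem]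
      have := Polynomial.ext_iff.mp h0 i
      simpa using this
    obtain ⟨q', rfl⟩ := hdvd
    refine ⟨q', mul_left_cancel₀ (a := C s) (by simpa using hs.ne_zero) ?_⟩
    rw [hq]; ring

lemma sat_pow {f : R[X]} (n : ℕ) (hf : C (s ^ n) * f ∈ Ideal.span {e (R := R) s t}) :
    f ∈ Ideal.span {e (R := R) s t} := by
  induction n generalizing f with
  | zero => simpa using hf
  | succ n ih =>
      refine sat hs hst (ih ?_)
      rw [pow_succ, map_mul] at hf
      have : C (s ^ n) * (C s * f) = C (s ^ n) * C s * f := by ring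
      rwa [this]

end sat

section quot

variable (s t) in
/-- The ring `R[X]/(sX - t)`. -/
abbrev Zst := R[X] ⧸ Ideal.span {e (R := R) s t}

lemma eps_vanish : ∀ a ∈ Ideal.span {e (R := R) s t}, eps s t a = 0 := by
  intro a ha
  rw [Ideal.mem_span_singleton] at ha
  obtain ⟨b, rfl⟩ := ha
  rw [map_mul, eps_e, zero_mul]

variable (s t) in
/-- The induced embedding `R[X]/(sX-t) → R_s`. -/
def epsBar : Zst s t →+* Localization.Away s :=
  Ideal.Quotient.lift _ (eps s t).toRingHom eps_vanish

@[simp] lemma epsBar_mk (f : R[X]) :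
    epsBar s t (Ideal.Quotient.mk _ f) = eps s t f := rfl

end quot

section inj

variable (hs : Prime s) (hst : ¬ s ∣ t)
include hs hst

lemma ker_eps_le_span : RingHom.ker (eps s t).toRingHom ≤ Ideal.span {e (R := R) s t} := by
  intro f hf
  obtain ⟨n, q, hq⟩ := ker_eps_le hs (RingHom.mem_ker.mp hf)
  refine sat_pow hs hst n ?_
  rw [hq, Ideal.mem_span_singleton]
  exact Dvd.intro _ rfl

lemma epsBar_injective : Function.Injective (epsBar s t (R := R)) :=
  RingHom.lift_injective_of_ker_le_ideal _ eps_vanish (ker_eps_le_span hs hst)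

lemma isDomain_away : IsDomain (Localization.Away s) :=
  IsLocalization.isDomain_localization (powers_le_nonZeroDivisors_of_noZeroDivisors hs.ne_zero)

lemma isDomain_Zst : IsDomain (Zst s t) :=
  haveI := isDomain_away hs hst
  Function.Injective.isDomain _ (epsBar_injective hs hst)

end inj

section L3

variable (hs : Prime s) (hst : ¬ s ∣ t)
include hs hst

lemma dvd_of_dvd_mul_X {z : Zst s t}
    (h : Ideal.Quotient.mk _ (C s) ∣ z * Ideal.Quotient.mk _ (X : R[X])) :
    Ideal.Quotient.mk (Ideal.span {e (R := R) s t}) (C s) ∣ z := by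
  haveI := quot_domain hs hst
  obtain ⟨w, hw⟩ := h
  obtain ⟨g, rfl⟩ := Ideal.Quotient.mk_surjective z
  obtain ⟨h₀, rfl⟩ := Ideal.Quotient.mk_surjective w
  have hmem : g * X - C s * h₀ ∈ Ideal.span {e (R := R) s t} := by
    rw [← Ideal.Quotient.eq_zero_iff_mem, map_sub, map_mul, map_mul, sub_eq_zero]
    exact hw
  rw [Ideal.mem_span_singleton] at hmem
  obtain ⟨q, hq⟩ := hmem
  set mk' := Ideal.Quotient.mk (Ideal.span {s}) with hmk'
  have hs0 : mk' s = 0 := by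
    rw [Ideal.Quotient.eq_zero_iff_mem]; exact Ideal.mem_span_singleton_self s
  have key : g.map mk' * X = - C (mk' t) * q.map mk' := by
    have := congrArg (Polynomial.map mk') hq
    rw [Polynomial.map_sub, Polynomial.map_mul, Polynomial.map_mul, Polynomial.map_mul,
      map_C, hs0, C_0, zero_mul, sub_zero, map_e_mod hs hst, Polynomial.map_X] at this
    rw [this, neg_mul]
  -- X divides q.map mk'
  have hc0 : (q.map mk').coeff 0 = 0 := by
    have := congrArg (fun P => Polynomial.coeff P 0) key
    simp only [coeff_mul_X_pow', mul_coeff_zero, coeff_neg, coeff_C_zero] at this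
    have h2 : (0 : R ⧸ Ideal.span {s}) = - (mk' t * (q.map mk').coeff 0) := by
      simpa using this
    have ht : mk' t ≠ 0 := mk_t_ne_zero hs hst
    have := h2.symm
    rw [neg_eq_zero, mul_eq_zero] at this
    tauto
  obtain ⟨rbar, hrbar⟩ := X_dvd_iff.mpr hc0
  have hg : g.map mk' = - C (mk' t) * rbar := by
    have hX : (X : (R ⧸ Ideal.span {s})[X]) ≠ 0 := X_ne_zero
    apply mul_right_cancel₀ hX
    rw [key, hrbar]
    ring
  obtain ⟨r, hr⟩ := Polynomial.map_surjective mk' Ideal.Quotient.mk_surjective rbar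
  have hzero : (g + C t * r).map mk' = 0 := by
    rw [Polynomial.map_add, Polynomial.map_mul, map_C, hr, hg]
    ring
  have hdvd : C s ∣ g + C t * r := by
    rw [C_dvd_iff_dvd_coeff]
    intro i
    rw [← Ideal.mem_span_singleton, ← Ideal.Quotient.eq_zero_iff_mem]
    have := Polynomial.ext_iff.mp hzero i
    simpa using this
  obtain ⟨w', hw'⟩ := hdvd
  have hCt : Ideal.Quotient.mk (Ideal.span {e (R := R) s t}) (C t)
      = Ideal.Quotient.mk _ (C s * X) := by
    rw [Ideal.Quotient.mk_eq_mk_iff_sub_mem]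
    have : C t - C s * X = -(e (R := R) s t) := by rw [e]; ring
    rw [this]
    exact neg_mem (Ideal.subset_span rfl)
  have : Ideal.Quotient.mk (Ideal.span {e (R := R) s t}) g
      = Ideal.Quotient.mk _ (C s) * (Ideal.Quotient.mk _ w'
        - Ideal.Quotient.mk _ X * Ideal.Quotient.mk _ r) := by
    have hg2 : g = C s * w' - C t * r := by rw [← hw']; ring
    rw [hg2, map_sub, map_mul, map_mul, hCt, map_mul]
    ring
  exact ⟨_, this⟩

end L3

section loc

variable (hs : Prime s) (hst : ¬ s ∣ t) [IsIntegrallyClosed R]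
variable {Z : Type*} [CommRing Z] [IsDomain Z] (Φ : Z ≃+* Zst s t)
variable (K : Type*) [Field K] [Algebra Z K] [IsFractionRing Z K]

lemma eps_C (r : R) : eps s t (C r) = algebraMap R (Localization.Away s) r := by
  simp [eps]

include hs hst in
lemma exists_rep (a : Z) (ha : Φ a = Ideal.Quotient.mk _ (C s))
    {x : K} (hx : IsIntegral Z x) :
    ∃ (u : Z) (m : ℕ), x * algebraMap Z K (a ^ m) = algebraMap Z K u := by
  set A := Localization.Away s with hA
  letI : Algebra Z A := ((epsBar s t).comp Φ.toRingHom).toAlgebra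
  haveI hDA : IsDomain A := isDomain_away hs hst
  have halg : ∀ z : Z, algebraMap Z A z = epsBar s t (Φ z) := fun _ => rfl
  have hinj : Function.Injective (algebraMap Z A) := by
    intro u v huv
    rw [halg, halg] at huv
    exact Φ.injective (epsBar_injective hs hst huv)
  have hmapa : ∀ n : ℕ, algebraMap Z A (a ^ n) = algebraMap R A (s ^ n) := by
    intro n
    rw [halg, map_pow, ha, map_pow, epsBar_mk, eps_C, map_pow]
  haveI hloc : IsLocalization (Submonoid.powers a) A := by
    constructor
    constructor
    · rintro ⟨y, n, rfl⟩
      simp only [hmapa n]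
      exact IsLocalization.map_units A ⟨s ^ n, pow_mem (Submonoid.mem_powers s) n⟩
    · intro y
      obtain ⟨⟨r, c⟩, hc⟩ := IsLocalization.surj (Submonoid.powers s) y
      obtain ⟨n, hn⟩ := c.2
      have hn' : s ^ n = (c : R) := hn
      refine ⟨⟨Φ.symm (Ideal.Quotient.mk _ (C r)), ⟨a ^ n, pow_mem (Submonoid.mem_powers a) n⟩⟩, ?_⟩
      simp only [hmapa n, hn', halg, RingEquiv.apply_symm_apply, epsBar_mk, eps_C]
      exact hc
    · intro u v huv
      exact ⟨1, by rw [hinj huv]⟩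
  haveI : IsIntegrallyClosed A :=
    isIntegrallyClosed_of_isLocalization A (Submonoid.powers s)
      (powers_le_nonZeroDivisors_of_noZeroDivisors hs.ne_zero)
  have ha0 : a ≠ 0 := by
    intro h0
    apply hs.ne_zero
    have : algebraMap Z A a = 0 := by rw [h0, map_zero]
    rw [halg, ha, epsBar_mk, eps_C] at this
    exact algebraMap_away_injective hs.ne_zero (by rw [this, map_zero])
  have hu : ∀ y : Submonoid.powers a, IsUnit (algebraMap Z K y) := by
    rintro ⟨y, n, rfl⟩
    rw [isUnit_iff_ne_zero]
    intro h0
    exact pow_ne_zero n ha0 ((map_eq_zero_iff _ (IsFractionRing.injective Z K)).mp h0)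
  letI : Algebra A K := (IsLocalization.lift (M := Submonoid.powers a) (S := A) hu).toAlgebra
  haveI : IsScalarTower Z A K := IsScalarTower.of_algebraMap_eq' (IsLocalization.lift_comp hu).symm
  haveI : IsFractionRing A K :=
    IsFractionRing.isFractionRing_of_isDomain_of_isLocalization (Submonoid.powers a) A K
  have hxa : IsIntegral A x := hx.tower_top
  obtain ⟨y, hy⟩ := IsIntegrallyClosed.isIntegral_iff.mp hxa
  obtain ⟨⟨z, c⟩, hc⟩ := IsLocalization.surj (Submonoid.powers a) y
  obtain ⟨m, hm⟩ := c.2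
  have hm' : a ^ m = (c : Z) := hm
  refine ⟨z, m, ?_⟩
  have := congrArg (algebraMap A K) hc
  rw [map_mul, hy, ← IsScalarTower.algebraMap_apply, ← IsScalarTower.algebraMap_apply] at this
  rw [hm']
  exact this

end loc

/-- Generic divisibility bootstrap in a domain. -/
lemma pow_dvd_of_dvd_mul_pow {Z : Type*} [CommRing Z] [IsDomain Z] {a b : Z} (ha : a ≠ 0)
    (hab : ∀ z, a ∣ z * b → a ∣ z) :
    ∀ m n u, a ^ m ∣ u * b ^ n → a ^ m ∣ u := by
  have h1 : ∀ (n : ℕ) (z : Z), a ∣ z * b ^ n → a ∣ z := by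
    intro n
    induction n with
    | zero => intro z hz; simpa using hz
    | succ n ih =>
        intro z hz
        refine ih z (hab _ ?_)
        rw [mul_assoc, ← pow_succ]
        exact hz
  intro m
  induction m with
  | zero => intro n u _; simpa using one_dvd u
  | succ m ih =>
      intro n u h
      have hau : a ∣ u := h1 n u (dvd_trans (dvd_pow_self a (Nat.succ_ne_zero m)) h)
      obtain ⟨u₁, rfl⟩ := hau
      have : a ^ m ∣ u₁ * b ^ n := by
        rw [← mul_dvd_mul_iff_left ha]
        have h' : a * a ^ m = a ^ (m + 1) := (pow_succ' a m).symm
        rw [h', ← mul_assoc]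
        exact h
      obtain ⟨w, hw⟩ := ih n u₁ this
      exact ⟨w, by rw [hw]; ring⟩

section Main

variable (k : Type*) [Field k] (p : Polynomial k)

/-- `b`-coefficient: the variable `a` (resp. `b`). -/
def sE : MvPolynomial (Fin 2) k := MvPolynomial.X 0

def tE : MvPolynomial (Fin 2) k := Polynomial.aeval (MvPolynomial.X 1) p

def θE : MvPolynomial (Fin 3) k :=
  MvPolynomial.X 0 * MvPolynomial.X 1 -
    Polynomial.aeval (MvPolynomial.X 2 : MvPolynomial (Fin 3) k) p

lemma prime_sE : Prime (sE k) := by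
  rw [← MulEquiv.prime_iff (MvPolynomial.finSuccEquiv k 1).toMulEquiv]
  have : (MvPolynomial.finSuccEquiv k 1).toMulEquiv (sE k) = Polynomial.X := by
    show (MvPolynomial.finSuccEquiv k 1) (MvPolynomial.X 0) = Polynomial.X
    exact MvPolynomial.finSuccEquiv_X_zero
  rw [this]
  exact Polynomial.prime_X

lemma not_dvd (hp : p ≠ 0) : ¬ sE k ∣ tE k p := by
  rintro ⟨q, hq⟩
  apply hp
  have h := congrArg (MvPolynomial.aeval (![0, Polynomial.X] : Fin 2 → Polynomial k)) hq
  rw [tE, ← Polynomial.aeval_algHom_apply, MvPolynomial.aeval_X] at h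
  simp only [Matrix.cons_val_one, Matrix.head_cons, Polynomial.aeval_X_left_apply] at h
  rw [sE, map_mul, MvPolynomial.aeval_X] at h
  simpa using h

lemma F_theta : (MvPolynomial.finSuccEquiv k 2) (θE k p) = e (sE k) (tE k p) := by
  have h1 : (1 : Fin 3) = Fin.succ 0 := rfl
  have h2 : (2 : Fin 3) = Fin.succ 1 := rfl
  have hC : Polynomial.aeval (Polynomial.C (MvPolynomial.X 1) : (MvPolynomial (Fin 2) k)[X]) p
      = Polynomial.C (Polynomial.aeval (MvPolynomial.X 1) p) :=
    Polynomial.aeval_algHom_apply (Polynomial.CAlgHom (R := k)) (MvPolynomial.X 1) p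
  rw [θE, map_sub, map_mul, ← Polynomial.aeval_algHom_apply, h1, h2,
    MvPolynomial.finSuccEquiv_X_zero, MvPolynomial.finSuccEquiv_X_succ,
    MvPolynomial.finSuccEquiv_X_succ, hC, e, sE, tE]
  ring

lemma W_theta :
    MvPolynomial.rename (Equiv.swap (0 : Fin 3) 1) (θE k p) = θE k p := by
  have h2 : Equiv.swap (0 : Fin 3) 1 2 = 2 :=
    Equiv.swap_apply_of_ne_of_ne (by decide) (by decide)
  rw [θE, map_sub, map_mul, MvPolynomial.rename_X, MvPolynomial.rename_X,
    ← Polynomial.aeval_algHom_apply, MvPolynomial.rename_X,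
    Equiv.swap_apply_left, Equiv.swap_apply_right, h2]
  ring

end Main

end HypNormal

end

open HypNormal

set_option synthInstance.maxHeartbeats 1000000 in
set_option maxHeartbeats 1000000 in
/-- For any field `k` and nonzero polynomial `p ∈ k[c]`, the ring
`Z = k[a,b,c]/(ab − p(c))` is a Noetherian integral domain which is integrally closed
in its field of fractions (i.e. a normal domain). -/
theorem hypersurfaceRing_noetherian_normal_domain
    (k : Type*) [Field k] (p : Polynomial k) (hp : p ≠ 0) :
    IsNoetherianRing (HypersurfaceRing k p) ∧ IsDomain (HypersurfaceRing k p) ∧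
      IsIntegrallyClosed (HypersurfaceRing k p) := by
  classical
  haveI hIC : IsIntegrallyClosed (MvPolynomial (Fin 2) k) :=
    UniqueFactorizationMonoid.instIsIntegrallyClosed
  have hs : Prime (sE k) := prime_sE k
  have hst : ¬ sE k ∣ tE k p := not_dvd k p hp
  haveI hZstDom : IsDomain (Zst (sE k) (tE k p)) := isDomain_Zst hs hst
  -- The two presentations
  let F : MvPolynomial (Fin 3) k ≃+* Polynomial (MvPolynomial (Fin 2) k) :=
    (MvPolynomial.finSuccEquiv k 2).toRingEquiv
  have hI : Ideal.span {HypNormal.e (sE k) (tE k p)}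
      = (Ideal.span {θE k p}).map (F : MvPolynomial (Fin 3) k →+* _) := by
    rw [Ideal.map_span, Set.image_singleton]
    congr 1
    rw [← F_theta k p]
    rfl
  have hIdef : Ideal.span {MvPolynomial.X 0 * MvPolynomial.X 1
      - Polynomial.aeval (MvPolynomial.X 2 : MvPolynomial (Fin 3) k) p}
      = Ideal.span {θE k p} := rfl
  let Φa : HypersurfaceRing k p ≃+* Zst (sE k) (tE k p) :=
    Ideal.quotientEquiv _ _ F hI
  let W : MvPolynomial (Fin 3) k ≃+* MvPolynomial (Fin 3) k :=
    (MvPolynomial.renameEquiv k (Equiv.swap (0 : Fin 3) 1)).toRingEquiv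
  have hJ : Ideal.span {θE k p}
      = (Ideal.span {θE k p}).map (W : MvPolynomial (Fin 3) k →+* _) := by
    rw [Ideal.map_span, Set.image_singleton]
    congr 1
    have : (W : MvPolynomial (Fin 3) k →+* _) (θE k p) = θE k p := W_theta k p
    rw [this]
  let σ : HypersurfaceRing k p ≃+* HypersurfaceRing k p :=
    Ideal.quotientEquiv _ _ W hJ
  let Φb : HypersurfaceRing k p ≃+* Zst (sE k) (tE k p) := σ.trans Φa
  -- domain
  haveI hZdom : IsDomain (HypersurfaceRing k p) :=
    Function.Injective.isDomain Φa.toRingHom Φa.injective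
  -- names
  set Z := HypersurfaceRing k p with hZdef
  let abar : Z := Ideal.Quotient.mk _ (MvPolynomial.X 0)
  let bbar : Z := Ideal.Quotient.mk _ (MvPolynomial.X 1)
  have hΦa_a : Φa abar = Ideal.Quotient.mk _ (Polynomial.X) := by
    show Ideal.Quotient.mk _ (F (MvPolynomial.X 0)) = _
    congr 1
    exact MvPolynomial.finSuccEquiv_X_zero
  have hΦa_b : Φa bbar = Ideal.Quotient.mk _ (Polynomial.C (sE k)) := by
    show Ideal.Quotient.mk _ (F (MvPolynomial.X 1)) = _
    congr 1
    have h1 : (1 : Fin 3) = Fin.succ 0 := rfl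
    show (MvPolynomial.finSuccEquiv k 2) (MvPolynomial.X 1) = _
    rw [h1, MvPolynomial.finSuccEquiv_X_succ]
    rfl
  have hσ_a : σ abar = bbar := by
    show Ideal.Quotient.mk _ (W (MvPolynomial.X 0)) = _
    congr 1
    show MvPolynomial.rename (Equiv.swap (0 : Fin 3) 1) (MvPolynomial.X 0) = _
    rw [MvPolynomial.rename_X, Equiv.swap_apply_left]
  have hσ_b : σ bbar = abar := by
    show Ideal.Quotient.mk _ (W (MvPolynomial.X 1)) = _
    congr 1
    show MvPolynomial.rename (Equiv.swap (0 : Fin 3) 1) (MvPolynomial.X 1) = _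
    rw [MvPolynomial.rename_X, Equiv.swap_apply_right]
  have hΦb_a : Φb abar = Ideal.Quotient.mk _ (Polynomial.C (sE k)) := by
    show Φa (σ abar) = _
    rw [hσ_a, hΦa_b]
  have hΦb_b : Φb bbar = Ideal.Quotient.mk _ (Polynomial.X) := by
    show Φa (σ bbar) = _
    rw [hσ_b, hΦa_a]
  -- abar ≠ 0
  have ha0 : abar ≠ 0 := by
    intro h0
    apply hs.ne_zero
    have h1 : epsBar (sE k) (tE k p) (Φb abar)
        = algebraMap _ (Localization.Away (sE k)) (sE k) := by
      rw [hΦb_a, epsBar_mk, eps_C]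
    rw [h0, map_zero, map_zero] at h1
    exact algebraMap_away_injective hs.ne_zero (by rw [← h1, map_zero])
  -- key divisibility
  have hab : ∀ z : Z, abar ∣ z * bbar → abar ∣ z := by
    intro z hz
    have h1 : Φb abar ∣ Φb z * Φb bbar := by
      rw [← map_mul]
      exact Φb.toRingHom.map_dvd hz
    rw [hΦb_a, hΦb_b] at h1
    have h2 := dvd_of_dvd_mul_X hs hst h1
    rw [← hΦb_a] at h2
    have h3 := Φb.symm.toRingHom.map_dvd h2
    simpa using h3
  refine ⟨inferInstance, hZdom, ?_⟩
  rw [isIntegrallyClosed_iff (FractionRing Z)]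
  intro x hx
  obtain ⟨u, m, hu⟩ := exists_rep hs hst Φb (FractionRing Z) abar hΦb_a hx
  obtain ⟨v, n, hv⟩ := exists_rep hs hst Φa (FractionRing Z) bbar hΦa_b hx
  have key : u * bbar ^ n = v * abar ^ m := by
    apply IsFractionRing.injective Z (FractionRing Z)
    rw [map_mul, map_mul, ← hu, ← hv]
    ring
  have hdvd : abar ^ m ∣ u :=
    pow_dvd_of_dvd_mul_pow ha0 hab m n u ⟨v, by rw [key]; ring⟩
  obtain ⟨w, rfl⟩ := hdvd
  refine ⟨w, ?_⟩
  have hcan : algebraMap Z (FractionRing Z) (abar ^ m) ≠ 0 := by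
    intro h0
    exact pow_ne_zero m ha0 ((map_eq_zero_iff _ (IsFractionRing.injective Z _)).mp h0)
  apply mul_right_cancel₀ hcan
  rw [hu, map_mul]
  ring
end
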